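/- (Repulsive case: the variational pressure is the mean-field one.) Assume u = −w with w > 0 (so v − u > 0 holds automatically). Then lim_{η→0⁺} inf_{q≥0} inf{ p²(q,ρ,η) : ρ ≥ 0, σ(q,ρ) ≥ 0 } = inf{ p²(0,ρ) : ρ ≥ 0, vρ ≥ μ }, where for u = −w one has p²(q,ρ,η) = p²(q,ρ) + η²/(f(0,ρ) + wq) and σ(q,ρ) = vρ − μ − wq. -/

import Mathlib

open MeasureTheory Real Filter Topology

noncomputable section

namespace PB

abbrev Kspace (ν : ℕ) : Type := EuclideanSpace ℝ (Fin ν)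

/-- kinetic energy `ε(k) = ‖k‖²/(2m)` -/
def eps (ν : ℕ) (m : ℝ) (k : Kspace ν) : ℝ := ‖k‖ ^ 2 / (2 * m)

/-- `f(k,ρ) = ε(k) − μ + vρ` -/
def fF (ν : ℕ) (m μ v : ℝ) (k : Kspace ν) (ρ : ℝ) : ℝ := eps ν m k - μ + v * ρ

/-- `E(k,q,ρ) = (f(k,ρ)² − u²q²|λ(k)|²)^{1/2}` -/
def eE (ν : ℕ) (m μ v u : ℝ) (lam : Kspace ν → ℂ) (k : Kspace ν) (q ρ : ℝ) : ℝ :=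
  Real.sqrt (fF ν m μ v k ρ ^ 2 - u ^ 2 * q ^ 2 * ‖lam k‖ ^ 2)

/-- `σ(q,ρ) = vρ − μ − |u|q` -/
def sigma0 (μ v u q ρ : ℝ) : ℝ := v * ρ - μ - |u| * q

/-- The point `(2π/L)·z` of the dual lattice `Λ* = (2π/L)ℤ^ν`. -/
def latticePt (ν : ℕ) (L : ℝ) (z : Fin ν → ℤ) : Kspace ν :=
  (WithLp.equiv 2 (Fin ν → ℝ)).symm fun i => (2 * π / L) * (z i : ℝ)

/-- integrand of the limiting approximating pressure -/
def p2Int (ν : ℕ) (m μ v u β : ℝ) (lam : Kspace ν → ℂ) (q ρ : ℝ) (k : Kspace ν) : ℝ :=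
  -β⁻¹ * Real.log (1 - Real.exp (-β * eE ν m μ v u lam k q ρ))
    - (eE ν m μ v u lam k q ρ - fF ν m μ v k ρ) / 2

/-- `p²(q,ρ)`, the limiting approximating pressure -/
def p2 (ν : ℕ) (m μ v u β : ℝ) (lam : Kspace ν → ℂ) (q ρ : ℝ) : ℝ :=
  (∫ k : Kspace ν, ((2 * π) ^ ν)⁻¹ * p2Int ν m μ v u β lam q ρ k)
    - u / 2 * q ^ 2 + v / 2 * ρ ^ 2

/-- `p²(q,ρ,η) = p²(q,ρ) + η²/(f(0,ρ) − uq)` -/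
def p2eta (ν : ℕ) (m μ v u β : ℝ) (lam : Kspace ν → ℂ) (q ρ η : ℝ) : ℝ :=
  p2 ν m μ v u β lam q ρ + η ^ 2 / (fF ν m μ v 0 ρ - u * q)

/-- `p²_Λ(q,ρ)`, the finite-volume approximating pressure (cube of side `L`, `V = L^ν`) -/
def p2L (ν : ℕ) (m μ v u β L : ℝ) (lam : Kspace ν → ℂ) (q ρ : ℝ) : ℝ :=
  -(β * L ^ ν)⁻¹ *
      (∑' z : Fin ν → ℤ,
        Real.log (1 - Real.exp (-β * eE ν m μ v u lam (latticePt ν L z) q ρ)))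
    - (2 * L ^ ν)⁻¹ *
      (∑' z : Fin ν → ℤ,
        (eE ν m μ v u lam (latticePt ν L z) q ρ - fF ν m μ v (latticePt ν L z) ρ))
    - u / 2 * q ^ 2 + v / 2 * ρ ^ 2

/-- `p²_Λ(q,ρ,η) = p²_Λ(q,ρ) + η²/(f(0,ρ) − uq)` -/
def p2Leta (ν : ℕ) (m μ v u β L : ℝ) (lam : Kspace ν → ℂ) (q ρ η : ℝ) : ℝ :=
  p2L ν m μ v u β L lam q ρ + η ^ 2 / (fF ν m μ v 0 ρ - u * q)


/-!
For `u = -w ≤ 0` the Bogoliubov energy satisfies `ε(k) ≤ E(k,q,ρ) ≤ f(k,ρ)` and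
`f(k,ρ) - E(k,q,ρ) ≤ w q |λ(k)|` on the admissible set. The Bose term `-β⁻¹ ln(1 - e^{-βE})`
decreases in `E`, so the integrand of `p²(q,ρ)` dominates that of `p²(0,ρ)`; hence
`p²(q,ρ,η) ≥ p²(q,ρ) ≥ p²(0,ρ)` and no admissible `(q,ρ)` goes below the right-hand side.
Conversely `q = 0` is always admissible and `p²(0,ρ,η) = p²(0,ρ) + η²/(vρ - μ) → p²(0,ρ)`.
Comparing the integrals needs integrability, which comes from
`-ln(1 - e^{-y}) ≤ 4 y^{-1/4} e^{-y/8}` and from the decay of `λ`.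
-/

open Set

lemma log_one_add_le_rpow_div {t ε : ℝ} (ht : 0 ≤ t) (hε : 0 < ε) (hε1 : ε ≤ 1) :
    log (1 + t) ≤ t ^ ε / ε := by
  have hlog := log_le_sub_one_of_pos (show 0 < (1 + t) ^ ε by positivity)
  rw [log_rpow (by positivity)] at hlog
  have hsub : (1 + t) ^ ε ≤ 1 + t ^ ε := by
    simpa using rpow_add_le_add_rpow zero_le_one ht hε.le hε1
  rw [le_div_iff₀ hε]
  linarith

lemma neg_log_one_sub_exp_neg_le {y ε : ℝ} (hy : 0 < y) (hε : 0 < ε) (hε1 : ε ≤ 1) :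
    -log (1 - exp (-y)) ≤ y ^ (-ε) * exp (-(ε * y / 2)) / ε := by
  set t := (exp y - 1)⁻¹ with ht
  have hey : 0 < exp y - 1 := by linarith [add_one_lt_exp hy.ne']
  have hlog : -log (1 - exp (-y)) = log (1 + t) := by
    rw [← log_inv, ht, exp_neg]
    congr 1
    field_simp
    ring
  -- `e^y - 1 = 2 e^{y/2} sinh (y/2) ≥ y e^{y/2}`
  have hsinh : y * exp (y / 2) ≤ exp y - 1 := by
    have hsh := (self_le_sinh_iff (x := y / 2)).mpr (by positivity)
    rw [sinh_eq] at hsh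
    have hsq : exp y = exp (y / 2) * exp (y / 2) := by rw [← exp_add]; ring_nf
    have hinv : exp (-(y / 2)) * exp (y / 2) = 1 := by rw [← exp_add]; simp
    nlinarith [exp_pos (y / 2)]
  have htle : t ≤ y⁻¹ * exp (-(y / 2)) := by
    rw [ht, exp_neg, ← mul_inv]
    exact inv_anti₀ (by positivity) hsinh
  calc -log (1 - exp (-y)) = log (1 + t) := hlog
    _ ≤ t ^ ε / ε := log_one_add_le_rpow_div (by positivity) hε hε1
    _ ≤ (y⁻¹ * exp (-(y / 2))) ^ ε / ε := by gcongr
    _ = y ^ (-ε) * exp (-(ε * y / 2)) / ε := by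
      rw [mul_rpow (by positivity) (by positivity), inv_rpow hy.le, ← rpow_neg hy.le,
        ← exp_mul]
      ring_nf

lemma one_add_rpow_le {t s : ℝ} (ht : 0 ≤ t) (hs : 0 ≤ s) :
    (1 + t) ^ s ≤ 2 ^ s * (1 + t ^ s) := by
  have hmax : (max 1 t) ^ s ≤ 1 + t ^ s := by
    rcases le_total 1 t with h | h
    · rw [max_eq_right h]; linarith
    · rw [max_eq_left h, one_rpow]; linarith [rpow_nonneg ht s]
  calc (1 + t) ^ s ≤ (2 * max 1 t) ^ s := by
        gcongr; linarith [le_max_left 1 t, le_max_right 1 t]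
    _ = 2 ^ s * (max 1 t) ^ s := mul_rpow zero_le_two (by positivity)
    _ ≤ 2 ^ s * (1 + t ^ s) := by gcongr

-- `log 0 = 0` makes `bosePressure β 0 = 0`, so it is antitone only on `Ioi 0`.
def bosePressure (β x : ℝ) : ℝ := -β⁻¹ * log (1 - exp (-β * x))

section BosePressure

variable {β : ℝ}

@[fun_prop]
lemma measurable_bosePressure : Measurable (bosePressure β) := by
  unfold bosePressure
  fun_prop

lemma bosePressure_nonneg (hβ : 0 < β) {x : ℝ} (hx : 0 ≤ x) : 0 ≤ bosePressure β x := by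
  have hexp : exp (-β * x) ≤ 1 := exp_le_one_iff.mpr (by nlinarith)
  have hlog : log (1 - exp (-β * x)) ≤ 0 :=
    log_nonpos (by linarith) (by linarith [exp_pos (-β * x)])
  unfold bosePressure
  nlinarith [inv_pos.mpr hβ]

lemma bosePressure_antitoneOn (hβ : 0 < β) : AntitoneOn (bosePressure β) (Ioi 0) := by
  intro x hx y _ hxy
  have hexp : exp (-β * y) ≤ exp (-β * x) := exp_le_exp.mpr (by nlinarith)
  have hexp1 : exp (-β * x) < 1 := exp_lt_one_iff.mpr (by nlinarith [mem_Ioi.mp hx])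
  have hlog : log (1 - exp (-β * x)) ≤ log (1 - exp (-β * y)) :=
    log_le_log (by linarith) (by linarith)
  unfold bosePressure
  nlinarith [inv_pos.mpr hβ]

lemma bosePressure_le (hβ : 0 < β) {x : ℝ} (hx : 0 < x) :
    bosePressure β x ≤ 4 * β⁻¹ * (β * x) ^ (-(1 / 4 : ℝ)) * exp (-(β * x / 8)) := by
  have h := neg_log_one_sub_exp_neg_le (mul_pos hβ hx) (ε := 1 / 4) (by norm_num) (by norm_num)
  rw [neg_mul_eq_neg_mul] at h
  unfold bosePressure
  calc -β⁻¹ * log (1 - exp (-β * x)) = β⁻¹ * -log (1 - exp (-β * x)) := by ring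
    _ ≤ β⁻¹ * ((β * x) ^ (-(1 / 4 : ℝ)) * exp (-(1 / 4 * (β * x) / 2)) / (1 / 4)) := by
      gcongr
    _ = _ := by ring_nf

end BosePressure

section Integrability

variable {E : Type*} [NormedAddCommGroup E] [NormedSpace ℝ E] [FiniteDimensional ℝ E]
  [MeasurableSpace E] [BorelSpace E] (μ : Measure E) [μ.IsAddHaarMeasure]

lemma integrable_of_norm_le_div_one_add_rpow {F : Type*} [NormedAddCommGroup F] {f : E → F}
    (hf : AEStronglyMeasurable f μ) {c s : ℝ} (hs : (Module.finrank ℝ E : ℝ) < s)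
    (hbound : ∀ x, ‖f x‖ ≤ c / (1 + ‖x‖ ^ s)) : Integrable f μ := by
  have hs0 : 0 ≤ s := (Nat.cast_nonneg _).trans hs.le
  have hc : 0 ≤ c := by
    have h := (le_div_iff₀ (by positivity)).mp ((norm_nonneg _).trans (hbound 0))
    rwa [zero_mul] at h
  refine ((integrable_one_add_norm hs).const_mul (c * 2 ^ s)).mono' hf
    (Eventually.of_forall fun x => (hbound x).trans ?_)
  rw [rpow_neg (by positivity), ← div_eq_mul_inv, div_le_div_iff₀ (by positivity) (by positivity),
    mul_assoc]
  gcongr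
  exact one_add_rpow_le (norm_nonneg x) hs0

lemma integrable_bosePressure_mul_norm_sq [Nontrivial E] {β a : ℝ} (hβ : 0 < β) (ha : 0 < a) :
    Integrable (fun x => bosePressure β (a * ‖x‖ ^ 2)) μ := by
  set d := Module.finrank ℝ E
  have hd : 1 ≤ d := Module.finrank_pos
  have hs : -1 < (d : ℝ) - 3 / 2 := by
    have : (1 : ℝ) ≤ d := by exact_mod_cast hd
    linarith
  rw [integrable_fun_norm_addHaar μ (f := fun r => bosePressure β (a * r ^ 2))]
  refine ((integrableOn_rpow_mul_exp_neg_mul_sq (b := β * a / 8) (by positivity) hs).const_mul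
    (4 * β⁻¹ * (β * a) ^ (-(1 / 4 : ℝ)))).mono' (by fun_prop) ?_
  refine ae_restrict_of_forall_mem measurableSet_Ioi fun y (hy : 0 < y) => ?_
  have hpow : y ^ (d - 1) * (β * (a * y ^ 2)) ^ (-(1 / 4 : ℝ)) =
      (β * a) ^ (-(1 / 4 : ℝ)) * y ^ ((d : ℝ) - 3 / 2) := by
    rw [← mul_assoc, mul_rpow (by positivity) (by positivity), ← rpow_natCast,
      ← rpow_natCast y 2, ← rpow_mul hy.le, Nat.cast_sub hd, mul_left_comm, ← rpow_add hy]
    congr 2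
    push_cast
    ring
  have hB := bosePressure_nonneg hβ (x := a * y ^ 2) (by positivity)
  rw [smul_eq_mul, norm_of_nonneg (by positivity)]
  calc y ^ (d - 1) * bosePressure β (a * y ^ 2)
      ≤ y ^ (d - 1) * (4 * β⁻¹ * (β * (a * y ^ 2)) ^ (-(1 / 4 : ℝ)) *
          exp (-(β * (a * y ^ 2) / 8))) := by
        gcongr
        exact bosePressure_le hβ (by positivity)
    _ = 4 * β⁻¹ * (y ^ (d - 1) * (β * (a * y ^ 2)) ^ (-(1 / 4 : ℝ))) *
          exp (-(β * (a * y ^ 2) / 8)) := by ring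
    _ = 4 * β⁻¹ * (β * a) ^ (-(1 / 4 : ℝ)) * (y ^ ((d : ℝ) - 3 / 2) *
          exp (-(β * a / 8) * y ^ 2)) := by
        rw [hpow]
        ring_nf

end Integrability

lemma tendsto_csInf_of_forall_exists_le {ι α : Type*} [ConditionallyCompleteLinearOrder α]
    [TopologicalSpace α] [OrderTopology α] {l : Filter ι} {S : ι → Set α} {T : Set α}
    (hT : T.Nonempty) (hTb : BddBelow T) (hle : ∀ i, ∀ x ∈ S i, ∃ t ∈ T, t ≤ x)
    (happrox : ∀ t ∈ T, ∃ g : ι → α, Tendsto g l (𝓝 t) ∧ ∀ i, g i ∈ S i) :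
    Tendsto (fun i => sInf (S i)) l (𝓝 (sInf T)) := by
  have hlow : ∀ i, ∀ x ∈ S i, sInf T ≤ x := fun i x hx =>
    let ⟨_, ht, htx⟩ := hle i x hx
    (csInf_le hTb ht).trans htx
  rw [tendsto_order]
  refine ⟨fun b hb => Eventually.of_forall fun i => ?_, fun b hb => ?_⟩
  · obtain ⟨t, ht⟩ := hT
    obtain ⟨g, -, hg⟩ := happrox t ht
    exact hb.trans_le (le_csInf ⟨g i, hg i⟩ (hlow i))
  · obtain ⟨t, ht, htb⟩ := exists_lt_of_csInf_lt hT hb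
    obtain ⟨g, hgt, hg⟩ := happrox t ht
    filter_upwards [hgt.eventually (gt_mem_nhds htb)] with i hi
    exact (csInf_le ⟨sInf T, hlow i⟩ (hg i)).trans_lt hi

section Bogoliubov

variable {ν : ℕ} {m μ v u w β q ρ : ℝ} {lam : Kspace ν → ℂ} {k : Kspace ν}

lemma eps_nonneg (hm : 0 < m) : 0 ≤ eps ν m k := by
  unfold eps
  positivity

lemma eps_pos (hm : 0 < m) (hk : k ≠ 0) : 0 < eps ν m k := by
  unfold eps
  have := norm_pos_iff.mpr hk
  positivity

lemma fF_eq : fF ν m μ v k ρ = eps ν m k + (v * ρ - μ) := by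
  unfold fF
  ring

lemma fF_zero : fF ν m μ v 0 ρ = v * ρ - μ := by
  simp [fF_eq, eps]

lemma fF_nonneg (hm : 0 < m) (hρ : μ ≤ v * ρ) : 0 ≤ fF ν m μ v k ρ := by
  rw [fF_eq]
  linarith [eps_nonneg (ν := ν) (k := k) hm]

lemma sigma0_neg (hw : 0 ≤ w) : sigma0 μ v (-w) q ρ = v * ρ - μ - w * q := by
  rw [sigma0, abs_neg, abs_of_nonneg hw]

lemma eE_neg : eE ν m μ v (-w) lam k q ρ = √(fF ν m μ v k ρ ^ 2 - (w * q * ‖lam k‖) ^ 2) := by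
  unfold eE
  ring_nf

lemma eE_zero (hf : 0 ≤ fF ν m μ v k ρ) : eE ν m μ v u lam k 0 ρ = fF ν m μ v k ρ := by
  simp [eE, sqrt_sq hf]

lemma eE_le_fF (hf : 0 ≤ fF ν m μ v k ρ) : eE ν m μ v u lam k q ρ ≤ fF ν m μ v k ρ :=
  sqrt_le_iff.mpr ⟨hf, by linarith [show 0 ≤ u ^ 2 * q ^ 2 * ‖lam k‖ ^ 2 by positivity]⟩

lemma eps_add_le_fF (hw : 0 ≤ w) (hq : 0 ≤ q) (hσ : w * q ≤ v * ρ - μ) (hl : ‖lam k‖ ≤ 1) :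
    eps ν m k + w * q * ‖lam k‖ ≤ fF ν m μ v k ρ := by
  rw [fF_eq]
  nlinarith [mul_nonneg hw hq]

lemma eps_le_eE (hm : 0 < m) (hw : 0 ≤ w) (hq : 0 ≤ q) (hσ : w * q ≤ v * ρ - μ)
    (hl : ‖lam k‖ ≤ 1) : eps ν m k ≤ eE ν m μ v (-w) lam k q ρ := by
  have h := eps_add_le_fF (m := m) hw hq hσ hl
  have he := eps_nonneg (ν := ν) (k := k) hm
  rw [eE_neg]
  exact le_sqrt_of_sq_le (by nlinarith [mul_nonneg (mul_nonneg hw hq) (norm_nonneg (lam k))])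

lemma fF_sub_eE_le (hm : 0 < m) (hw : 0 ≤ w) (hq : 0 ≤ q) (hσ : w * q ≤ v * ρ - μ)
    (hl : ‖lam k‖ ≤ 1) : fF ν m μ v k ρ - eE ν m μ v (-w) lam k q ρ ≤ w * q * ‖lam k‖ := by
  have h := eps_add_le_fF (m := m) hw hq hσ hl
  have he := eps_nonneg (ν := ν) (k := k) hm
  have ha := mul_nonneg (mul_nonneg hw hq) (norm_nonneg (lam k))
  rw [eE_neg, sub_le_comm]
  exact le_sqrt_of_sq_le (by nlinarith)

lemma p2Int_eq : p2Int ν m μ v u β lam q ρ k =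
    bosePressure β (eE ν m μ v u lam k q ρ) + (fF ν m μ v k ρ - eE ν m μ v u lam k q ρ) / 2 := by
  unfold p2Int bosePressure
  ring

lemma measurable_p2Int (hmeas : Measurable lam) : Measurable (p2Int ν m μ v u β lam q ρ) := by
  unfold p2Int eE fF eps
  fun_prop

lemma p2Int_nonneg (hβ : 0 < β) (hf : 0 ≤ fF ν m μ v k ρ) : 0 ≤ p2Int ν m μ v u β lam q ρ k := by
  rw [p2Int_eq]
  have hE : 0 ≤ bosePressure β (eE ν m μ v u lam k q ρ) := bosePressure_nonneg hβ (sqrt_nonneg _)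
  linarith [eE_le_fF (u := u) (lam := lam) (q := q) hf]

lemma p2Int_zero_le (hm : 0 < m) (hβ : 0 < β) (hw : 0 ≤ w) (hq : 0 ≤ q)
    (hσ : w * q ≤ v * ρ - μ) (hl : ‖lam k‖ ≤ 1) (hk : k ≠ 0) :
    p2Int ν m μ v (-w) β lam 0 ρ k ≤ p2Int ν m μ v (-w) β lam q ρ k := by
  have hf := fF_nonneg (ν := ν) (k := k) hm (show μ ≤ v * ρ by nlinarith [mul_nonneg hw hq])
  have hE := eps_le_eE hm hw hq hσ hl
  have hEf := eE_le_fF (u := -w) (lam := lam) (q := q) hf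
  have hanti := bosePressure_antitoneOn hβ ((eps_pos hm hk).trans_le hE)
    ((eps_pos hm hk).trans_le (hE.trans hEf)) hEf
  rw [p2Int_eq, p2Int_eq, eE_zero hf]
  linarith

lemma p2Int_le (hm : 0 < m) (hβ : 0 < β) (hw : 0 ≤ w) (hq : 0 ≤ q)
    (hσ : w * q ≤ v * ρ - μ) (hl : ‖lam k‖ ≤ 1) (hk : k ≠ 0) :
    p2Int ν m μ v (-w) β lam q ρ k ≤ bosePressure β (eps ν m k) + w * q / 2 * ‖lam k‖ := by
  have hE := eps_le_eE hm hw hq hσ hl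
  have hanti := bosePressure_antitoneOn hβ (eps_pos hm hk) ((eps_pos hm hk).trans_le hE) hE
  have := fF_sub_eE_le hm hw hq hσ hl
  rw [p2Int_eq]
  linarith

lemma integrable_bosePressure_eps [NeZero ν] (hm : 0 < m) (hβ : 0 < β) :
    Integrable fun k : Kspace ν => bosePressure β (eps ν m k) := by
  have heq : (fun k : Kspace ν => bosePressure β (eps ν m k)) =
      fun k => bosePressure β ((2 * m)⁻¹ * ‖k‖ ^ 2) := by
    funext k
    rw [eps, div_eq_inv_mul]
  rw [heq]
  exact integrable_bosePressure_mul_norm_sq volume hβ (by positivity)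

lemma integrable_p2Int [NeZero ν] (hm : 0 < m) (hβ : 0 < β) (hw : 0 ≤ w) (hq : 0 ≤ q)
    (hσ : w * q ≤ v * ρ - μ) (hmeas : Measurable lam) (hlam1 : ∀ k, ‖lam k‖ ≤ 1)
    (hlamInt : Integrable fun k => ‖lam k‖) : Integrable (p2Int ν m μ v (-w) β lam q ρ) := by
  refine ((integrable_bosePressure_eps hm hβ).add (hlamInt.const_mul (w * q / 2))).mono'
    (measurable_p2Int hmeas).aestronglyMeasurable ?_
  filter_upwards [volume.ae_ne 0] with k hk
  rw [norm_of_nonneg (p2Int_nonneg hβ (fF_nonneg hm (by nlinarith [mul_nonneg hw hq])))]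
  exact p2Int_le hm hβ hw hq hσ (hlam1 k) hk

lemma p2_nonneg (hm : 0 < m) (hβ : 0 < β) (hw : 0 ≤ w) (hv : 0 ≤ v) (hρ : μ ≤ v * ρ) :
    0 ≤ p2 ν m μ v (-w) β lam q ρ := by
  have hint : 0 ≤ ∫ k : Kspace ν, ((2 * π) ^ ν)⁻¹ * p2Int ν m μ v (-w) β lam q ρ k :=
    integral_nonneg fun k => mul_nonneg (by positivity) (p2Int_nonneg hβ (fF_nonneg hm hρ))
  unfold p2
  nlinarith [mul_nonneg hw (sq_nonneg q), mul_nonneg hv (sq_nonneg ρ)]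

lemma p2_zero_le [NeZero ν] (hm : 0 < m) (hβ : 0 < β) (hw : 0 ≤ w) (hq : 0 ≤ q)
    (hσ : w * q ≤ v * ρ - μ) (hmeas : Measurable lam) (hlam1 : ∀ k, ‖lam k‖ ≤ 1)
    (hlamInt : Integrable fun k => ‖lam k‖) :
    p2 ν m μ v (-w) β lam 0 ρ ≤ p2 ν m μ v (-w) β lam q ρ := by
  have hρ : μ ≤ v * ρ := by nlinarith [mul_nonneg hw hq]
  have hint : ∫ k : Kspace ν, ((2 * π) ^ ν)⁻¹ * p2Int ν m μ v (-w) β lam 0 ρ k ≤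
      ∫ k : Kspace ν, ((2 * π) ^ ν)⁻¹ * p2Int ν m μ v (-w) β lam q ρ k := by
    refine integral_mono_of_nonneg (Eventually.of_forall fun k => ?_)
      ((integrable_p2Int hm hβ hw hq hσ hmeas hlam1 hlamInt).const_mul _) ?_
    · exact mul_nonneg (by positivity) (p2Int_nonneg hβ (fF_nonneg hm hρ))
    · filter_upwards [volume.ae_ne 0] with k hk
      gcongr
      exact p2Int_zero_le hm hβ hw hq hσ (hlam1 k) hk
  unfold p2
  nlinarith [mul_nonneg hw (sq_nonneg q)]

lemma p2_le_p2eta (hw : 0 ≤ w) (hq : 0 ≤ q) (hσ : w * q ≤ v * ρ - μ) (η : ℝ) :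
    p2 ν m μ v (-w) β lam q ρ ≤ p2eta ν m μ v (-w) β lam q ρ η := by
  unfold p2eta
  rw [fF_zero]
  have : 0 ≤ v * ρ - μ - -w * q := by nlinarith [mul_nonneg hw hq]
  have := div_nonneg (sq_nonneg η) this
  linarith

lemma tendsto_p2eta_nhds_zero :
    Tendsto (fun η => p2eta ν m μ v u β lam q ρ η) (𝓝 0) (𝓝 (p2 ν m μ v u β lam q ρ)) := by
  unfold p2eta
  exact (continuous_const.add ((continuous_pow 2).div_const _)).tendsto' _ _ (by simp)

end Bogoliubov

theorem statement17_general
    (ν : ℕ) (hν : 1 ≤ ν) (m β μ v : ℝ) (hm : 0 < m) (hβ : 0 < β) (hv : 0 < v)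
    (lam : Kspace ν → ℂ) (hmeas : Measurable lam)
    (hlam1 : ∀ k, ‖lam k‖ ≤ 1)
    (c δ : ℝ) (hδ : 0 < δ)
    (hdec : ∀ k : Kspace ν, ‖lam k‖ ≤ c / (1 + ‖k‖ ^ (max (ν : ℝ) ((ν : ℝ) / 2 + 1) + δ)))
    (w : ℝ) (hw : 0 < w) :
    Tendsto (fun η : ℝ =>
        sInf {x : ℝ | ∃ q ρ : ℝ, 0 ≤ q ∧ 0 ≤ ρ ∧ 0 ≤ sigma0 μ v (-w) q ρ ∧
          x = p2eta ν m μ v (-w) β lam q ρ η})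
      (𝓝[>] (0:ℝ))
      (𝓝 (sInf {x : ℝ | ∃ ρ : ℝ, 0 ≤ ρ ∧ μ ≤ v * ρ ∧
          x = p2 ν m μ v (-w) β lam 0 ρ})) := by
  have : NeZero ν := ⟨by omega⟩
  have hdim : (Module.finrank ℝ (Kspace ν) : ℝ) < max (ν : ℝ) ((ν : ℝ) / 2 + 1) + δ := by
    rw [finrank_euclideanSpace_fin]
    exact (le_max_left _ _).trans_lt (lt_add_of_pos_right _ hδ)
  have hlamInt : Integrable fun k : Kspace ν => ‖lam k‖ :=
    (integrable_of_norm_le_div_one_add_rpow volume hmeas.aestronglyMeasurable hdim hdec).norm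
  refine tendsto_csInf_of_forall_exists_le ⟨_, |μ| / v, by positivity, ?_, rfl⟩ ?_ ?_ ?_
  · rw [mul_div_cancel₀ _ hv.ne']
    exact le_abs_self μ
  · exact ⟨0, by rintro _ ⟨ρ, -, hρ, rfl⟩; exact p2_nonneg hm hβ hw.le hv.le hρ⟩
  · rintro η _ ⟨q, ρ, hq, hρ, hσ, rfl⟩
    rw [sigma0_neg hw.le, sub_nonneg] at hσ
    exact ⟨_, ⟨ρ, hρ, by nlinarith, rfl⟩,
      (p2_zero_le hm hβ hw.le hq hσ hmeas hlam1 hlamInt).trans (p2_le_p2eta hw.le hq hσ η)⟩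
  · rintro _ ⟨ρ, hρ, hμρ, rfl⟩
    refine ⟨_, tendsto_p2eta_nhds_zero.mono_left nhdsWithin_le_nhds,
      fun η => ⟨0, ρ, le_rfl, hρ, ?_, rfl⟩⟩
    rw [sigma0_neg hw.le]
    linarith

theorem statement17
    (ν : ℕ) (hν : 1 ≤ ν) (m β μ v : ℝ) (hm : 0 < m) (hβ : 0 < β) (hv : 0 < v)
    (lam : Kspace ν → ℂ) (hmeas : Measurable lam) (hlam0 : lam 0 = 1)
    (hlam1 : ∀ k, ‖lam k‖ ≤ 1)
    (c δ : ℝ) (hδ : 0 < δ)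
    (hdec : ∀ k : Kspace ν, ‖lam k‖ ≤ c / (1 + ‖k‖ ^ (max (ν : ℝ) ((ν : ℝ) / 2 + 1) + δ)))
    (w : ℝ) (hw : 0 < w) :
    Tendsto (fun η : ℝ =>
        sInf {x : ℝ | ∃ q ρ : ℝ, 0 ≤ q ∧ 0 ≤ ρ ∧ 0 ≤ sigma0 μ v (-w) q ρ ∧
          x = p2eta ν m μ v (-w) β lam q ρ η})
      (𝓝[>] (0:ℝ))
      (𝓝 (sInf {x : ℝ | ∃ ρ : ℝ, 0 ≤ ρ ∧ μ ≤ v * ρ ∧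
          x = p2 ν m μ v (-w) β lam 0 ρ})) :=
  statement17_general ν hν m β μ v hm hβ hv lam hmeas hlam1 c δ hδ hdec w hw

end PB
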